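/- arXiv:2305.07813 — 2 statements merged into one kernel-verified Lean document; each statement's English description precedes it below -/
import Mathlib

section
/- The C-step never increases the covariance determinant: given an h-subset H_old with mean μ_old and covariance Σ_old (assumed nonsingular), if H_new consists of the h observations with smallest Mahalanobis distances D(x_i; μ_old, Σ_old), then det(Σ_new) ≤ det(Σ_old), where (μ_new, Σ_new) are the mean and covariance of H_new, with equality if and only if (μ_new, Σ_new) = (μ_old, Σ_old). -/
/-!
Put `S = h⁻¹ ∑_{i ∈ Hnew} (xᵢ - μold)(xᵢ - μold)ᵀ` and `dᵢ = (xᵢ - μold)ᵀ Sigold⁻¹ (xᵢ - μold)`.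
Then `tr (Sigold⁻¹ S)` is the mean of the `dᵢ` over `Hnew`, which by the choice of `Hnew` is at
most their mean over `Hold`, i.e. `tr (Sigold⁻¹ Sigold) = p`. For `A` positive definite and `S`
positive semidefinite with `tr (A⁻¹ S) ≤ p`, AM-GM on the eigenvalues of `A^{-1/2} S A^{-1/2}`
gives `det S ≤ det A`, with equality only if `S = A`. Finally
`S = Signew + (μnew - μold)(μnew - μold)ᵀ`, so the matrix determinant lemma gives
`det Signew ≤ det S`, with equality for nonsingular `Signew` only if `μnew = μold`.
-/

open Matrix Finset

theorem Finset.sum_le_sum_of_card_eq_of_forall_le {ι M : Type*} [DecidableEq ι]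
    [AddCommMonoid M] [LinearOrder M] [IsOrderedCancelAddMonoid M] {s t : Finset ι}
    {f : ι → M} (hst : #s = #t) (hf : ∀ i ∈ s, ∀ j ∉ s, f i ≤ f j) :
    ∑ i ∈ s, f i ≤ ∑ i ∈ t, f i := by
  rw [← sum_sdiff_le_sum_sdiff]
  have hcard : #(s \ t) = #(t \ s) := card_sdiff_comm hst
  obtain hts | hts := (t \ s).eq_empty_or_nonempty
  · rw [card_eq_zero.mp (hcard.trans (card_eq_zero.mpr hts)), hts]
  obtain ⟨j, hj, hjmin⟩ := (t \ s).exists_min_image f hts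
  calc ∑ i ∈ s \ t, f i ≤ #(s \ t) • f j :=
        sum_le_card_nsmul _ _ _ fun i hi => hf i (mem_sdiff.mp hi).1 j (mem_sdiff.mp hj).2
    _ = #(t \ s) • f j := by rw [hcard]
    _ ≤ ∑ i ∈ t \ s, f i := card_nsmul_le_sum _ _ _ hjmin

namespace Real

variable {ι : Type*} [Fintype ι] {l : ι → ℝ}

theorem prod_exp_sub_one_le_one (hl : ∑ i, l i ≤ Fintype.card ι) :
    ∏ i, exp (l i - 1) ≤ 1 := by
  rw [← exp_sum, sum_sub_distrib, sum_const, card_univ, nsmul_one, exp_le_one_iff]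
  linarith

theorem prod_le_one_of_sum_le_card (h0 : ∀ i, 0 ≤ l i) (hl : ∑ i, l i ≤ Fintype.card ι) :
    ∏ i, l i ≤ 1 :=
  (prod_le_prod (fun i _ => h0 i) fun i _ => by linarith [add_one_le_exp (l i - 1)]).trans
    (prod_exp_sub_one_le_one hl)

theorem eq_one_of_prod_eq_one_of_sum_le_card (h0 : ∀ i, 0 ≤ l i)
    (hl : ∑ i, l i ≤ Fintype.card ι) (hp : ∏ i, l i = 1) (i : ι) : l i = 1 := by
  by_contra hi
  have hpos : ∀ j ∈ univ, 0 < l j := fun j _ =>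
    (h0 j).lt_of_ne' fun hj => by simp [prod_eq_zero (mem_univ j) hj] at hp
  have hlt : ∏ j, l j < ∏ j, exp (l j - 1) :=
    prod_lt_prod hpos (fun j _ => by linarith [add_one_le_exp (l j - 1)])
      ⟨i, mem_univ i, by linarith [add_one_lt_exp (x := l i - 1) (sub_ne_zero.mpr hi)]⟩
  linarith [prod_exp_sub_one_le_one hl]

end Real

namespace Matrix

variable {m R : Type*}

theorem sum_vecMulVec {ι : Type*} [NonUnitalNonAssocSemiring R] (s : Finset ι)
    (u : ι → m → R) (v : m → R) :
    ∑ i ∈ s, vecMulVec (u i) v = vecMulVec (∑ i ∈ s, u i) v := by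
  ext a b
  simp only [sum_apply, vecMulVec_apply, Finset.sum_apply, Finset.sum_mul]

theorem vecMulVec_sum {ι : Type*} [NonUnitalNonAssocSemiring R] (s : Finset ι)
    (u : m → R) (v : ι → m → R) :
    ∑ i ∈ s, vecMulVec u (v i) = vecMulVec u (∑ i ∈ s, v i) := by
  ext a b
  simp only [sum_apply, vecMulVec_apply, Finset.sum_apply, Finset.mul_sum]

theorem sum_vecMulVec_sub_sub {ι : Type*} [CommRing R] {s : Finset ι} {x : ι → m → R}
    {μ : m → R} (hμ : ∑ i ∈ s, x i = #s • μ) (c : m → R) :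
    ∑ i ∈ s, vecMulVec (x i - c) (x i - c) =
      ∑ i ∈ s, vecMulVec (x i - μ) (x i - μ) + #s • vecMulVec (μ - c) (μ - c) := by
  have hdev : ∑ i ∈ s, (x i - μ) = 0 := by rw [sum_sub_distrib, hμ, sum_const, sub_self]
  have hsplit : ∀ i, vecMulVec (x i - c) (x i - c) = vecMulVec (x i - μ) (x i - μ) +
      (vecMulVec (x i - μ) (μ - c) + vecMulVec (μ - c) (x i - μ)) +
        vecMulVec (μ - c) (μ - c) := by
    intro i
    rw [← sub_add_sub_cancel (x i) μ c, add_vecMulVec, vecMulVec_add, vecMulVec_add]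
    abel
  rw [sum_congr rfl fun i _ => hsplit i, sum_add_distrib, sum_add_distrib, sum_add_distrib,
    sum_vecMulVec, vecMulVec_sum, hdev, zero_vecMulVec, vecMulVec_zero, sum_const, add_zero,
    add_zero]

variable [Fintype m]

theorem trace_mul_vecMulVec_self [CommSemiring R] (M : Matrix m m R) (u : m → R) :
    (M * vecMulVec u u).trace = u ⬝ᵥ (M *ᵥ u) := by
  rw [mul_vecMulVec, trace_vecMulVec, dotProduct_comm]

theorem trace_mul_sum_vecMulVec_self [CommSemiring R] {ι : Type*} (M : Matrix m m R)
    (s : Finset ι) (u : ι → m → R) :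
    (M * ∑ i ∈ s, vecMulVec (u i) (u i)).trace = ∑ i ∈ s, u i ⬝ᵥ (M *ᵥ u i) := by
  simp only [Matrix.mul_sum, trace_sum, trace_mul_vecMulVec_self]

theorem posSemidef_vecMulVec_self (v : m → ℝ) : (vecMulVec v v).PosSemidef := by
  simpa using posSemidef_vecMulVec_self_star v

variable [DecidableEq m]

theorem det_add_vecMulVec [CommRing R] {B : Matrix m m R} (hB : IsUnit B.det) (u v : m → R) :
    (B + vecMulVec u v).det = B.det * (1 + v ⬝ᵥ (B⁻¹ *ᵥ u)) := by
  have hfactor : B + vecMulVec u v = B * (1 + vecMulVec (B⁻¹ *ᵥ u) v) := by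
    rw [Matrix.mul_add, Matrix.mul_one, mul_vecMulVec, mulVec_mulVec, mul_nonsing_inv _ hB,
      one_mulVec]
  rw [hfactor, det_mul, vecMulVec_eq Unit, det_one_add_replicateCol_mul_replicateRow]

theorem PosSemidef.det_le_det_add_vecMulVec_self {B : Matrix m m ℝ} (hB : B.PosSemidef)
    (v : m → ℝ) : B.det ≤ (B + vecMulVec v v).det := by
  by_cases hBdet : IsUnit B.det
  · rw [det_add_vecMulVec hBdet]
    refine le_mul_of_one_le_right hB.det_nonneg (le_add_of_nonneg_right ?_)
    simpa using hB.inv.dotProduct_mulVec_nonneg v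
  · rw [isUnit_iff_ne_zero, not_not] at hBdet
    rw [hBdet]
    exact (hB.add (posSemidef_vecMulVec_self v)).det_nonneg

theorem PosDef.eq_zero_of_det_add_vecMulVec_self_eq {B : Matrix m m ℝ} (hB : B.PosDef)
    {v : m → ℝ} (hv : (B + vecMulVec v v).det = B.det) : v = 0 := by
  rw [det_add_vecMulVec ((isUnit_iff_isUnit_det B).mp hB.isUnit),
    mul_eq_left₀ hB.det_pos.ne', add_eq_left] at hv
  by_contra hv0
  simpa [hv] using hB.inv.dotProduct_mulVec_pos hv0

variable {M : Matrix m m ℝ}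

theorem PosSemidef.det_le_one_of_trace_le (hM : M.PosSemidef)
    (htr : M.trace ≤ Fintype.card m) : M.det ≤ 1 := by
  rw [hM.1.det_eq_prod_eigenvalues]
  rw [hM.1.trace_eq_sum_eigenvalues] at htr
  simpa using Real.prod_le_one_of_sum_le_card hM.eigenvalues_nonneg (by simpa using htr)

theorem PosSemidef.eq_one_of_det_eq_one_of_trace_le (hM : M.PosSemidef)
    (htr : M.trace ≤ Fintype.card m) (hdet : M.det = 1) : M = 1 := by
  rw [hM.1.det_eq_prod_eigenvalues] at hdet
  rw [hM.1.trace_eq_sum_eigenvalues] at htr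
  have hdiag : hM.1.eigenvalues = 1 := funext <|
    Real.eq_one_of_prod_eq_one_of_sum_le_card hM.eigenvalues_nonneg (by simpa using htr)
      (by simpa using hdet)
  rw [hM.1.spectral_theorem, hdiag]
  simp

open scoped MatrixOrder in
theorem PosDef.det_le_det_of_trace_inv_mul_le {A S : Matrix m m ℝ} (hA : A.PosDef)
    (hS : S.PosSemidef) (htr : (A⁻¹ * S).trace ≤ Fintype.card m) :
    S.det ≤ A.det ∧ (S.det = A.det → S = A) := by
  obtain ⟨R, hR, hRR⟩ : ∃ R : Matrix m m ℝ, R.IsHermitian ∧ R * R = A :=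
    ⟨CFC.sqrt A, (CFC.sqrt_nonneg A).posSemidef.1, CFC.sqrt_mul_sqrt_self A hA.posSemidef.nonneg⟩
  have hRdet : IsUnit R.det :=
    isUnit_mul_self_iff.mp (by rw [← det_mul, hRR]; exact hA.det_pos.ne'.isUnit)
  obtain ⟨M, hM, htrM, hSM⟩ : ∃ M : Matrix m m ℝ,
      M.PosSemidef ∧ M.trace ≤ Fintype.card m ∧ S = R * M * R := by
    refine ⟨R⁻¹ * S * R⁻¹, ?_, ?_, ?_⟩
    · simpa only [conjTranspose_nonsing_inv, hR.eq] using hS.mul_mul_conjTranspose_same R⁻¹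
    · rwa [trace_mul_comm, ← Matrix.mul_assoc, ← mul_inv_rev, hRR]
    · rw [← Matrix.mul_assoc, nonsing_inv_mul_cancel_right _ _ hRdet,
        mul_nonsing_inv_cancel_left _ _ hRdet]
  have hdetS : S.det = M.det * A.det := by
    rw [hSM, ← hRR, det_mul, det_mul, det_mul]; ring
  refine ⟨?_, fun heq => ?_⟩
  · rw [hdetS]
    exact mul_le_of_le_one_left hA.det_pos.le (hM.det_le_one_of_trace_le htrM)
  · have hdetM : M.det = 1 := by
      rwa [hdetS, mul_eq_right₀ hA.det_pos.ne'] at heq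
    rw [hSM, hM.eq_one_of_det_eq_one_of_trace_le htrM hdetM, Matrix.mul_one, hRR]

theorem trace_inv_mul_smul_sum_vecMulVec_le {ι : Type*} [DecidableEq ι] {A : Matrix m m ℝ}
    (hA : IsUnit A.det) {r : ℝ} (hr : 0 ≤ r) {x : ι → m → ℝ} {c : m → ℝ} {s t : Finset ι}
    (hst : #s = #t) (hAt : A = r • ∑ i ∈ t, vecMulVec (x i - c) (x i - c))
    (hsel : ∀ i ∈ s, ∀ j ∉ s,
      (x i - c) ⬝ᵥ (A⁻¹ *ᵥ (x i - c)) ≤ (x j - c) ⬝ᵥ (A⁻¹ *ᵥ (x j - c))) :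
    (A⁻¹ * (r • ∑ i ∈ s, vecMulVec (x i - c) (x i - c))).trace ≤ Fintype.card m := by
  calc (A⁻¹ * (r • ∑ i ∈ s, vecMulVec (x i - c) (x i - c))).trace
      = r * ∑ i ∈ s, (x i - c) ⬝ᵥ (A⁻¹ *ᵥ (x i - c)) := by
        rw [Matrix.mul_smul, trace_smul, trace_mul_sum_vecMulVec_self, smul_eq_mul]
    _ ≤ r * ∑ i ∈ t, (x i - c) ⬝ᵥ (A⁻¹ *ᵥ (x i - c)) :=
        mul_le_mul_of_nonneg_left (sum_le_sum_of_card_eq_of_forall_le hst hsel) hr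
    _ = (A⁻¹ * A).trace := by
        rw [← smul_eq_mul, ← trace_mul_sum_vecMulVec_self, ← trace_smul, ← Matrix.mul_smul, ← hAt]
    _ = Fintype.card m := by rw [nonsing_inv_mul _ hA, trace_one]

end Matrix

theorem c_step_decreases_determinant_general {n p h : ℕ}
    (x : Fin n → Fin p → ℝ) (hhpos : 0 < h)
    (Hold Hnew : Finset (Fin n))
    (hHold : Hold.card = h) (hHnew : Hnew.card = h)
    (μold : Fin p → ℝ)
    (Sigold : Matrix (Fin p) (Fin p) ℝ)
    (hSigold : Sigold = (h : ℝ)⁻¹ •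
      ∑ i ∈ Hold, vecMulVec (x i - μold) (x i - μold))
    (hSignonsing : IsUnit Sigold.det)
    (hsel : ∀ i ∈ Hnew, ∀ j ∉ Hnew,
      Real.sqrt ((x i - μold) ⬝ᵥ (Sigold⁻¹ *ᵥ (x i - μold))) ≤
        Real.sqrt ((x j - μold) ⬝ᵥ (Sigold⁻¹ *ᵥ (x j - μold))))
    (μnew : Fin p → ℝ) (hμnew : μnew = (h : ℝ)⁻¹ • ∑ i ∈ Hnew, x i)
    (Signew : Matrix (Fin p) (Fin p) ℝ)
    (hSignew : Signew = (h : ℝ)⁻¹ •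
      ∑ i ∈ Hnew, vecMulVec (x i - μnew) (x i - μnew)) :
    Signew.det ≤ Sigold.det ∧
      (Signew.det = Sigold.det ↔ μnew = μold ∧ Signew = Sigold) := by
  have hh0 : (h : ℝ) ≠ 0 := by positivity
  have hcov (s : Finset (Fin n)) (c : Fin p → ℝ) :
      ((h : ℝ)⁻¹ • ∑ i ∈ s, vecMulVec (x i - c) (x i - c)).PosSemidef :=
    (posSemidef_sum s fun i _ => posSemidef_vecMulVec_self _).smul (by positivity)
  have hA : Sigold.PosDef :=
    (hSigold ▸ hcov Hold μold).posDef_iff_isUnit.mpr ((isUnit_iff_isUnit_det _).mpr hSignonsing)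
  set S := (h : ℝ)⁻¹ • ∑ i ∈ Hnew, vecMulVec (x i - μold) (x i - μold) with hSdef
  have htr : (Sigold⁻¹ * S).trace ≤ Fintype.card (Fin p) := by
    refine trace_inv_mul_smul_sum_vecMulVec_le hSignonsing (by positivity)
      (hHnew.trans hHold.symm) hSigold fun i hi j hj => ?_
    refine (Real.sqrt_le_sqrt_iff ?_).mp (hsel i hi j hj)
    simpa only [star_trivial] using hA.inv.posSemidef.dotProduct_mulVec_nonneg (x j - μold)
  have hS : S = Signew + vecMulVec (μnew - μold) (μnew - μold) := by
    have hsum : ∑ i ∈ Hnew, x i = #Hnew • μnew := by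
      rw [hHnew, ← Nat.cast_smul_eq_nsmul ℝ, hμnew, smul_inv_smul₀ hh0]
    rw [hSdef, sum_vecMulVec_sub_sub hsum, hHnew, ← Nat.cast_smul_eq_nsmul ℝ, smul_add, ← hSignew,
      inv_smul_smul₀ hh0]
  obtain ⟨hSA, hSA_eq⟩ := hA.det_le_det_of_trace_inv_mul_le (hcov Hnew μold) htr
  have hBS : Signew.det ≤ S.det :=
    hS ▸ (hSignew ▸ hcov Hnew μnew).det_le_det_add_vecMulVec_self _
  refine ⟨hBS.trans hSA, fun heq => ?_, fun ⟨_, hSig⟩ => hSig ▸ rfl⟩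
  have hSeq : S = Sigold := hSA_eq (le_antisymm hSA (heq ▸ hBS))
  have hB : Signew.PosDef := (hSignew ▸ hcov Hnew μnew).posDef_iff_det_ne_zero.mpr
    (heq ▸ hA.det_pos.ne')
  have hμ : μnew - μold = 0 :=
    hB.eq_zero_of_det_add_vecMulVec_self_eq (by rw [← hS, hSeq, heq])
  refine ⟨sub_eq_zero.mp hμ, ?_⟩
  rw [← hSeq, hS, hμ, zero_vecMulVec, add_zero]

/-- The C-step never increases the covariance determinant: if `Hnew` consists
of the `h` observations with smallest Mahalanobis distances with respect to
`(μold, Sigold)`, the mean and covariance of the old `h`-subset, then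
`det Signew ≤ det Sigold`, with equality iff `(μnew, Signew) = (μold, Sigold)`. -/
theorem c_step_decreases_determinant {n p h : ℕ}
    (x : Fin n → Fin p → ℝ) (hh : h ≤ n) (hhpos : 0 < h)
    (Hold Hnew : Finset (Fin n))
    (hHold : Hold.card = h) (hHnew : Hnew.card = h)
    (μold : Fin p → ℝ) (hμold : μold = (h : ℝ)⁻¹ • ∑ i ∈ Hold, x i)
    (Sigold : Matrix (Fin p) (Fin p) ℝ)
    (hSigold : Sigold = (h : ℝ)⁻¹ •
      ∑ i ∈ Hold, vecMulVec (x i - μold) (x i - μold))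
    (hSignonsing : IsUnit Sigold.det)
    (hsel : ∀ i ∈ Hnew, ∀ j ∉ Hnew,
      Real.sqrt ((x i - μold) ⬝ᵥ (Sigold⁻¹ *ᵥ (x i - μold))) ≤
        Real.sqrt ((x j - μold) ⬝ᵥ (Sigold⁻¹ *ᵥ (x j - μold))))
    (μnew : Fin p → ℝ) (hμnew : μnew = (h : ℝ)⁻¹ • ∑ i ∈ Hnew, x i)
    (Signew : Matrix (Fin p) (Fin p) ℝ)
    (hSignew : Signew = (h : ℝ)⁻¹ •
      ∑ i ∈ Hnew, vecMulVec (x i - μnew) (x i - μnew)) :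
    Signew.det ≤ Sigold.det ∧
      (Signew.det = Sigold.det ↔ μnew = μold ∧ Signew = Sigold) :=
  c_step_decreases_determinant_general x hhpos Hold Hnew hHold hHnew μold Sigold hSigold hSignonsing
    hsel μnew hμnew Signew hSignew
end

section
/- Iterating the C-step yields a nonincreasing sequence of determinants det(Σ₁) ≥ det(Σ₂) ≥ …, which is bounded below by 0 and hence converges; moreover, since there are only finitely many h-subsets, the sequence becomes constant after finitely many steps. -/
open Matrix Finset Filter

/-- Iterating the C-step yields a nonincreasing, nonnegative sequence of
covariance determinants, which converges; moreover, since there are only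
finitely many `h`-subsets, the sequence becomes constant after finitely
many steps. -/
theorem c_step_iteration_converges {n p h : ℕ}
    (x : Fin n → Fin p → ℝ) (hhpos : 0 < h)
    (H : ℕ → Finset (Fin n)) (hcard : ∀ k, (H k).card = h)
    (S : ℕ → Matrix (Fin p) (Fin p) ℝ)
    (hS : ∀ k, S k = (h : ℝ)⁻¹ • ∑ i ∈ H k,
      vecMulVec (x i - (h : ℝ)⁻¹ • ∑ j ∈ H k, x j)
        (x i - (h : ℝ)⁻¹ • ∑ j ∈ H k, x j))
    (hnonsing : ∀ k, IsUnit (S k).det)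
    (hmono : ∀ k, (S (k + 1)).det ≤ (S k).det)
    (hnonneg : ∀ k, 0 ≤ (S k).det) :
    (∃ L : ℝ, 0 ≤ L ∧ Tendsto (fun k => (S k).det) atTop (nhds L)) ∧
    (∃ N : ℕ, ∀ k, N ≤ k → (S k).det = (S N).det) := by
  set f : ℕ → ℝ := fun k => (S k).det with hf
  have hanti : Antitone f := antitone_nat_of_succ_le hmono
  -- f has finite range
  set g : Finset (Fin n) → ℝ := fun A =>
    ((h : ℝ)⁻¹ • ∑ i ∈ A,
      vecMulVec (x i - (h : ℝ)⁻¹ • ∑ j ∈ A, x j)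
        (x i - (h : ℝ)⁻¹ • ∑ j ∈ A, x j)).det with hg
  have hfg : ∀ k, f k = g (H k) := fun k => by simp [hf, hg, hS k]
  have hsub : Set.range f ⊆ Set.range g := by
    rintro _ ⟨k, rfl⟩; exact ⟨H k, (hfg k).symm⟩
  have hfin : (Set.range f).Finite := (Set.finite_range g).subset hsub
  set T := hfin.toFinset with hT
  have hTne : T.Nonempty := by
    refine ⟨f 0, ?_⟩; simp [hT]
  obtain ⟨N, hN⟩ := hfin.mem_toFinset.mp (T.min'_mem hTne)
  have hmin : ∀ k, f N ≤ f k := by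
    intro k
    rw [hN]
    exact T.min'_le _ (by simp [hT])
  have hconst : ∀ k, N ≤ k → f k = f N := fun k hk =>
    le_antisymm (hanti hk) (hmin k)
  refine ⟨⟨f N, hnonneg N, ?_⟩, ⟨N, hconst⟩⟩
  exact tendsto_atTop_of_eventually_const hconst
end
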